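/- (Weyl's inequality for singular values) For matrices A, E ∈ ℝ^{m×n} and any index i, |σ_i(A + E) - σ_i(A)| ≤ ‖E‖₂, where σ_i denotes the i-th largest singular value and ‖·‖₂ the spectral norm. -/

import Mathlib

/-!
Courant–Fischer by a dimension count. Let `n` be the number of columns and `B = A + E`. The
eigenvectors of `BᵀB` belonging to its `i + 1` largest eigenvalues span a subspace `V` on which
`‖B x‖ ≥ σᵢ(B) ‖x‖`, and those of `AᵀA` belonging to its `n - i` smallest eigenvalues span a
subspace `W` on which `‖A x‖ ≤ σᵢ(A) ‖x‖`. Since `dim V + dim W > n`, some unit vector `x` lies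
in both, whence `σᵢ(B) ≤ ‖B x‖ ≤ ‖A x‖ + ‖E x‖ ≤ σᵢ(A) + ‖E‖₂`. Applying this to `B` and `-E`
gives the reverse inequality.
-/

open Matrix

/-- The singular values of a real matrix, listed in decreasing order and
zero-padded: the `i`-th largest square root of an eigenvalue of `Aᴴ * A`. -/
noncomputable def singVals {m n : Type*} [Fintype m] [Fintype n] [DecidableEq n]
    (A : Matrix m n ℝ) : ℕ → ℝ := fun i =>
  (((Finset.univ : Finset n).toList.map fun j =>
    Real.sqrt ((show (Aᵀ * A).IsHermitian by
      simpa only [conjTranspose_eq_transpose_of_trivial] using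
        Matrix.isHermitian_conjTranspose_mul_self A).eigenvalues j)).insertionSort
      (· ≥ ·)).getD i 0

/-- The spectral norm of a real matrix: its largest singular value. -/
noncomputable def specNorm {m n : Type*} [Fintype m] [Fintype n] [DecidableEq n]
    (A : Matrix m n ℝ) : ℝ := singVals A 0

open Module Submodule Finset
open scoped RealInnerProductSpace

namespace List

variable {α : Type*} [LinearOrder α] {l : List α} {i : ℕ}

theorem Pairwise.succ_le_countP_getElem_le (hl : l.Pairwise (· ≥ ·)) (hi : i < l.length) :
    i + 1 ≤ l.countP (fun a => l[i] ≤ a) := by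
  have hprefix : (l.take (i + 1)).countP (fun a => l[i] ≤ a) = i + 1 := by
    rw [countP_eq_length.2, length_take, min_eq_left hi]
    intro a ha
    obtain ⟨k, hk, rfl⟩ := mem_take_iff_getElem.1 ha
    simpa using hl.rel_get_of_le (a := ⟨k, by omega⟩) (b := ⟨i, hi⟩) (by simp; omega)
  exact hprefix ▸ (take_sublist _ _).countP_le

theorem Pairwise.length_sub_le_countP_le_getElem (hl : l.Pairwise (· ≥ ·)) (hi : i < l.length) :
    l.length - i ≤ l.countP (fun a => a ≤ l[i]) := by
  have hsuffix : (l.drop i).countP (fun a => a ≤ l[i]) = l.length - i := by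
    rw [countP_eq_length.2, length_drop]
    intro a ha
    obtain ⟨k, hk, rfl⟩ := mem_drop_iff_getElem.1 ha
    simpa using hl.rel_get_of_le (a := ⟨i, hi⟩) (b := ⟨i + k, by omega⟩) (by simp)
  exact hsuffix ▸ (drop_sublist _ _).countP_le

end List

namespace OrthonormalBasis

variable {ι E : Type*} [Fintype ι] [NormedAddCommGroup E] [InnerProductSpace ℝ E]
  (b : OrthonormalBasis ι ℝ E)

theorem inner_eq_zero_of_mem_span_image {s : Set ι} {x : E} (hx : x ∈ span ℝ (b '' s))
    {j : ι} (hj : j ∉ s) : ⟪b j, x⟫ = 0 := by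
  rw [← b.coe_toBasis, b.toBasis.mem_span_image] at hx
  by_contra hne
  exact hj (hx (by simpa [b.repr_apply_apply] using hne))

theorem finrank_span_image (s : Finset ι) : finrank ℝ (span ℝ (b '' s)) = #s := by
  rw [← Subtype.range_coe (s := (s : Set ι)), ← Set.range_comp,
    finrank_span_eq_card (b.orthonormal.linearIndependent.comp _ Subtype.val_injective)]
  simp

end OrthonormalBasis

namespace Matrix.IsHermitian

variable {n : Type*} [Fintype n] [DecidableEq n] {M : Matrix n n ℝ} (hM : M.IsHermitian)

theorem toEuclideanLin_eigenvectorBasis (j : n) :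
    toEuclideanLin M (hM.eigenvectorBasis j) = hM.eigenvalues j • hM.eigenvectorBasis j := by
  ext1
  simp [toLpLin_apply, hM.mulVec_eigenvectorBasis]

theorem inner_toEuclideanLin_self (x : EuclideanSpace ℝ n) :
    ⟪x, toEuclideanLin M x⟫ = ∑ j, hM.eigenvalues j * ⟪hM.eigenvectorBasis j, x⟫ ^ 2 := by
  rw [← hM.eigenvectorBasis.sum_inner_mul_inner]
  refine Finset.sum_congr rfl fun j _ => ?_
  rw [← isSymmetric_toEuclideanLin_iff.mpr hM, toEuclideanLin_eigenvectorBasis,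
    real_inner_smul_left, real_inner_comm]
  ring

theorem inner_toEuclideanLin_self_le {S : Set n} {c : ℝ}
    (hS : ∀ j ∈ S, hM.eigenvalues j ≤ c)
    {x : EuclideanSpace ℝ n} (hx : x ∈ span ℝ (hM.eigenvectorBasis '' S)) :
    ⟪x, toEuclideanLin M x⟫ ≤ c * ‖x‖ ^ 2 := by
  rw [hM.inner_toEuclideanLin_self, ← hM.eigenvectorBasis.sum_sq_inner_right, Finset.mul_sum]
  refine Finset.sum_le_sum fun j _ => ?_
  by_cases hj : j ∈ S
  · exact mul_le_mul_of_nonneg_right (hS j hj) (sq_nonneg _)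
  · simp [hM.eigenvectorBasis.inner_eq_zero_of_mem_span_image hx hj]

theorem le_inner_toEuclideanLin_self {S : Set n} {c : ℝ}
    (hS : ∀ j ∈ S, c ≤ hM.eigenvalues j)
    {x : EuclideanSpace ℝ n} (hx : x ∈ span ℝ (hM.eigenvectorBasis '' S)) :
    c * ‖x‖ ^ 2 ≤ ⟪x, toEuclideanLin M x⟫ := by
  rw [hM.inner_toEuclideanLin_self, ← hM.eigenvectorBasis.sum_sq_inner_right, Finset.mul_sum]
  refine Finset.sum_le_sum fun j _ => ?_
  by_cases hj : j ∈ S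
  · exact mul_le_mul_of_nonneg_right (hS j hj) (sq_nonneg _)
  · simp [hM.eigenvectorBasis.inner_eq_zero_of_mem_span_image hx hj]

end Matrix.IsHermitian

theorem Submodule.exists_mem_inf_ne_zero_of_finrank_lt {K V : Type*} [DivisionRing K]
    [AddCommGroup V] [Module K V] [FiniteDimensional K V] {s t : Submodule K V}
    (h : finrank K V < finrank K s + finrank K t) : ∃ x ∈ s, x ∈ t ∧ x ≠ 0 := by
  by_contra! hst
  exact h.not_ge (finrank_add_finrank_le_of_disjoint (disjoint_def.2 hst))

section DecreasingValues

variable {ι α : Type*} [Fintype ι] [LinearOrder α]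

noncomputable def decreasingValues (f : ι → α) : List α :=
  ((univ : Finset ι).toList.map f).insertionSort (· ≥ ·)

variable (f : ι → α) {i : ℕ}

theorem length_decreasingValues : (decreasingValues f).length = Fintype.card ι := by
  simp [decreasingValues]

theorem mem_decreasingValues {a : α} : a ∈ decreasingValues f ↔ ∃ j, f j = a := by
  simp [decreasingValues, (List.perm_insertionSort _ _).mem_iff]

theorem countP_decreasingValues (p : α → Prop) [DecidablePred p] :
    (decreasingValues f).countP (fun a => p a) = #{j | p (f j)} := by
  rw [decreasingValues, (List.perm_insertionSort _ _).countP_eq, List.countP_map,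
    Function.comp_def, ← Multiset.coe_countP, coe_toList, Multiset.countP_eq_card_filter]
  rfl

theorem succ_le_card_getD_decreasingValues_le (hi : i < Fintype.card ι) (d : α) :
    i + 1 ≤ #{j | (decreasingValues f).getD i d ≤ f j} := by
  rw [← length_decreasingValues f] at hi
  rw [List.getD_eq_getElem _ _ hi]
  exact ((List.pairwise_insertionSort _ _).succ_le_countP_getElem_le hi).trans_eq
    (countP_decreasingValues f _)

theorem card_sub_le_card_le_getD_decreasingValues (hi : i < Fintype.card ι) (d : α) :
    Fintype.card ι - i ≤ #{j | f j ≤ (decreasingValues f).getD i d} := by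
  rw [← length_decreasingValues f] at hi ⊢
  rw [List.getD_eq_getElem _ _ hi]
  exact ((List.pairwise_insertionSort _ _).length_sub_le_countP_le_getElem hi).trans_eq
    (countP_decreasingValues f _)

theorem le_getD_zero_decreasingValues (j : ι) (d : α) :
    f j ≤ (decreasingValues f).getD 0 d := by
  have hcard := card_sub_le_card_le_getD_decreasingValues f (Fintype.card_pos_iff.2 ⟨j⟩) d
  exact filter_card_eq (le_antisymm (card_filter_le _ _) hcard) j (mem_univ j)

end DecreasingValues

theorem Matrix.isHermitian_transpose_mul_self {m n : Type*} [Fintype m] (A : Matrix m n ℝ) :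
    (Aᵀ * A).IsHermitian := by
  simpa only [conjTranspose_eq_transpose_of_trivial] using isHermitian_conjTranspose_mul_self A

section SingularValues

variable {m n : Type*} [Fintype m] [Fintype n] [DecidableEq n] (A : Matrix m n ℝ)

theorem singVals_eq_getD (i : ℕ) : singVals A i =
    (decreasingValues fun j => √((isHermitian_transpose_mul_self A).eigenvalues j)).getD i 0 :=
  rfl

theorem singVals_eq_zero_of_card_le {i : ℕ} (hi : Fintype.card n ≤ i) : singVals A i = 0 := by
  rw [singVals_eq_getD, List.getD_eq_default _ _ (by rwa [length_decreasingValues])]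

theorem singVals_nonneg (i : ℕ) : 0 ≤ singVals A i := by
  rcases lt_or_ge i (Fintype.card n) with hi | hi
  · rw [singVals_eq_getD, List.getD_eq_getElem _ _ (by rwa [length_decreasingValues])]
    obtain ⟨j, hj⟩ :=
      (mem_decreasingValues fun j => √((isHermitian_transpose_mul_self A).eigenvalues j)).1
        (List.getElem_mem _)
    exact hj ▸ Real.sqrt_nonneg _
  · rw [singVals_eq_zero_of_card_le A hi]

theorem specNorm_nonneg : 0 ≤ specNorm A := singVals_nonneg A 0

theorem norm_toEuclideanLin_sq (x : EuclideanSpace ℝ n) :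
    ‖toEuclideanLin A x‖ ^ 2 = ⟪x, toEuclideanLin (Aᵀ * A) x⟫ := by
  rw [← real_inner_self_eq_norm_sq]
  simp only [toLpLin_apply, EuclideanSpace.inner_eq_star_dotProduct, ← mulVec_mulVec,
    star_trivial]
  rw [dotProduct_mulVec, mulVec_transpose]

theorem norm_toEuclideanLin_le_of_mem_span {S : Set n} {c : ℝ} (hc : 0 ≤ c)
    (hS : ∀ j ∈ S, √((isHermitian_transpose_mul_self A).eigenvalues j) ≤ c)
    {x : EuclideanSpace ℝ n}
    (hx : x ∈ span ℝ ((isHermitian_transpose_mul_self A).eigenvectorBasis '' S)) :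
    ‖toEuclideanLin A x‖ ≤ c * ‖x‖ := by
  refine pow_le_pow_iff_left₀ (norm_nonneg _) (by positivity) two_ne_zero |>.1 ?_
  rw [norm_toEuclideanLin_sq, mul_pow]
  exact (isHermitian_transpose_mul_self A).inner_toEuclideanLin_self_le
    (fun j hj => (Real.sqrt_le_iff.1 (hS j hj)).2) hx

theorem le_norm_toEuclideanLin_of_mem_span {S : Set n} {c : ℝ} (hc : 0 ≤ c)
    (hS : ∀ j ∈ S, c ≤ √((isHermitian_transpose_mul_self A).eigenvalues j))
    {x : EuclideanSpace ℝ n}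
    (hx : x ∈ span ℝ ((isHermitian_transpose_mul_self A).eigenvectorBasis '' S)) :
    c * ‖x‖ ≤ ‖toEuclideanLin A x‖ := by
  refine pow_le_pow_iff_left₀ (by positivity) (norm_nonneg _) two_ne_zero |>.1 ?_
  rw [norm_toEuclideanLin_sq, mul_pow]
  exact (isHermitian_transpose_mul_self A).le_inner_toEuclideanLin_self
    (fun j hj => (Real.le_sqrt hc ((posSemidef_conjTranspose_mul_self A).eigenvalues_nonneg j)).1
      (hS j hj)) hx

theorem norm_toEuclideanLin_le_specNorm (x : EuclideanSpace ℝ n) :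
    ‖toEuclideanLin A x‖ ≤ specNorm A * ‖x‖ := by
  have hx : x ∈ span ℝ ((isHermitian_transpose_mul_self A).eigenvectorBasis '' Set.univ) := by
    rw [Set.image_univ, ← OrthonormalBasis.coe_toBasis, Module.Basis.span_eq]
    trivial
  exact norm_toEuclideanLin_le_of_mem_span A (specNorm_nonneg A)
    (fun j _ => le_getD_zero_decreasingValues
      (fun j => √((isHermitian_transpose_mul_self A).eigenvalues j)) j 0) hx

theorem exists_finrank_ge_singVals_mul_norm_le {i : ℕ} (hi : i < Fintype.card n) :
    ∃ V : Submodule ℝ (EuclideanSpace ℝ n), i + 1 ≤ finrank ℝ V ∧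
      ∀ x ∈ V, singVals A i * ‖x‖ ≤ ‖toEuclideanLin A x‖ := by
  set hA := isHermitian_transpose_mul_self A
  refine ⟨span ℝ
    (hA.eigenvectorBasis '' ({j | singVals A i ≤ √(hA.eigenvalues j)} : Finset n)),
    ?_, fun x hx => le_norm_toEuclideanLin_of_mem_span A (singVals_nonneg A i) ?_ hx⟩
  · rw [hA.eigenvectorBasis.finrank_span_image]
    exact succ_le_card_getD_decreasingValues_le _ hi 0
  · intro j hj
    exact (mem_filter.1 hj).2

theorem exists_finrank_ge_norm_le_singVals_mul {i : ℕ} (hi : i < Fintype.card n) :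
    ∃ W : Submodule ℝ (EuclideanSpace ℝ n), Fintype.card n - i ≤ finrank ℝ W ∧
      ∀ x ∈ W, ‖toEuclideanLin A x‖ ≤ singVals A i * ‖x‖ := by
  set hA := isHermitian_transpose_mul_self A
  refine ⟨span ℝ
    (hA.eigenvectorBasis '' ({j | √(hA.eigenvalues j) ≤ singVals A i} : Finset n)),
    ?_, fun x hx => norm_toEuclideanLin_le_of_mem_span A (singVals_nonneg A i) ?_ hx⟩
  · rw [hA.eigenvectorBasis.finrank_span_image]
    exact card_sub_le_card_le_getD_decreasingValues _ hi 0
  · intro j hj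
    exact (mem_filter.1 hj).2

theorem singVals_add_le (E : Matrix m n ℝ) (i : ℕ) :
    singVals (A + E) i ≤ singVals A i + specNorm E := by
  rcases lt_or_ge i (Fintype.card n) with hi | hi
  · obtain ⟨V, hV, hAEV⟩ := exists_finrank_ge_singVals_mul_norm_le (A + E) hi
    obtain ⟨W, hW, hAW⟩ := exists_finrank_ge_norm_le_singVals_mul A hi
    obtain ⟨x, hxV, hxW, hx⟩ := exists_mem_inf_ne_zero_of_finrank_lt (s := V) (t := W)
      (by rw [finrank_euclideanSpace]; omega)
    refine le_of_mul_le_mul_right ?_ (norm_pos_iff.2 hx)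
    calc singVals (A + E) i * ‖x‖
        ≤ ‖toEuclideanLin A x + toEuclideanLin E x‖ := by
          rw [← LinearMap.add_apply, ← map_add]
          exact hAEV x hxV
      _ ≤ ‖toEuclideanLin A x‖ + ‖toEuclideanLin E x‖ := norm_add_le _ _
      _ ≤ singVals A i * ‖x‖ + specNorm E * ‖x‖ :=
        add_le_add (hAW x hxW) (norm_toEuclideanLin_le_specNorm E x)
      _ = (singVals A i + specNorm E) * ‖x‖ := (add_mul _ _ _).symm
  · rw [singVals_eq_zero_of_card_le _ hi, singVals_eq_zero_of_card_le _ hi, zero_add]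
    exact specNorm_nonneg E

theorem singVals_neg : singVals (-A) = singVals A := by
  have hgram : (-A)ᵀ * -A = Aᵀ * A := by
    rw [transpose_neg, Matrix.neg_mul, Matrix.mul_neg, neg_neg]
  funext i
  simp only [singVals_eq_getD]
  -- `congr!` reduces the goal to the equality of the Gram matrices, closed by `hgram`
  congr!

theorem specNorm_neg : specNorm (-A) = specNorm A := by
  rw [specNorm, specNorm, singVals_neg]

end SingularValues

/-- Weyl's inequality for singular values. -/
theorem weyl_singular_values {m n : ℕ} (A E : Matrix (Fin m) (Fin n) ℝ) (i : ℕ) :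
    |singVals (A + E) i - singVals A i| ≤ specNorm E := by
  have hupper := singVals_add_le A E i
  have hlower := singVals_add_le (A + E) (-E) i
  rw [add_neg_cancel_right, specNorm_neg] at hlower
  rw [abs_sub_le_iff]
  constructor <;> linarith
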